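/- For all integers p, q ≥ 0, the number of signed (p,q)-involutions satisfies α_{p,q} = Σ_{L ∈ 𝒟(p,q)} ω(L), the sum of the weights of all (p,q) Delannoy paths. -/

import Mathlib

/-- A signed `(p,q)`-involution: a pair `(π, ε)` where `π` is an involution of
`{1,…,p+q}` and `ε` assigns a sign (`true` = `+`, `false` = `-`) to each fixed
point of `π` (we normalize `ε` to be `true` on non-fixed points), such that the
number of fixed points with sign `+` minus the number of fixed points with
sign `-` equals `p - q`. -/
def IsSignedInv (p q : ℕ) (x : Equiv.Perm (Fin (p + q)) × (Fin (p + q) → Bool)) : Prop :=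
  x.1 * x.1 = 1 ∧ (∀ i, x.1 i ≠ i → x.2 i = true) ∧
    ((Finset.univ.filter fun i => x.1 i = i ∧ x.2 i = true).card : ℤ) -
      ((Finset.univ.filter fun i => x.1 i = i ∧ x.2 i = false).card : ℤ) = (p : ℤ) - (q : ℤ)

/-- `γ_{k,p,q}`: the number of signed `(p,q)`-involutions whose underlying
involution has exactly `k` two-cycles, i.e. exactly `2k` non-fixed points. -/
noncomputable def gammaCount (k p q : ℕ) : ℕ :=
  Nat.card {x : Equiv.Perm (Fin (p + q)) × (Fin (p + q) → Bool) //
    IsSignedInv p q x ∧ (Finset.univ.filter fun i => x.1 i ≠ i).card = 2 * k}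

/-- `α_{p,q}`: the number of signed `(p,q)`-involutions. -/
noncomputable def alphaCount (p q : ℕ) : ℕ :=
  Nat.card {x : Equiv.Perm (Fin (p + q)) × (Fin (p + q) → Bool) // IsSignedInv p q x}
/-- A step of a lattice path: east `(1,0)`, north `(0,1)`, or diagonal `(1,1)`. -/
inductive DStep : Type
  | E | N | D
deriving DecidableEq

/-- The displacement vector of a step. -/
def stepVec : DStep → ℕ × ℕ
  | .E => (1, 0)
  | .N => (0, 1)
  | .D => (1, 1)

/-- A `(p,q)` Delannoy path: a sequence of steps `E`, `N`, `D` whose total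
displacement from `(0,0)` is `(p,q)`. -/
def IsDelannoy (p q : ℕ) (l : List DStep) : Prop :=
  (l.map stepVec).sum = (p, q)

/-- `D(p,q)`, the number of `(p,q)` Delannoy paths. -/
noncomputable def delannoyNum (p q : ℕ) : ℕ :=
  Nat.card {l : List DStep // IsDelannoy p q l}

/-- The weight of the part of a Delannoy path starting at the given lattice
point: a diagonal step starting at `(a,b)` contributes a factor `a+b+1`,
other steps contribute `1`. -/
def weightFrom : ℕ × ℕ → List DStep → ℕ
  | _, [] => 1
  | ab, s :: t => (if s = DStep.D then ab.1 + ab.2 + 1 else 1) * weightFrom (ab + stepVec s) t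

/-- The weight `ω(L)` of a Delannoy path `L` (starting at the origin): the
product over all diagonal steps going from a point `(a,b)` to `(a+1,b+1)`
of the numbers `a+b+1`. -/
def weight (l : List DStep) : ℕ := weightFrom (0, 0) l

/-! Removing a point `a` from a signed involution either removes a fixed point of sign `±`, or
removes a two-cycle `(a b)` with one of the `n - 1` other points `b`. So the number `A(n, d)` of
signed involutions of `n` points with balance `d` satisfies
`A(n, d) = A(n-1, d-1) + A(n-1, d+1) + (n-1) A(n-2, d)`. For `n = p + q`, `d = p - q` this is the
recursion `W(p+1,q+1) = W(p,q+1) + W(p+1,q) + (p+q+1) W(p,q)` that the weighted Delannoy sums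
`W = delannoyWeightSum` satisfy by splitting off the last step, a final diagonal step from `(p,q)`
having weight `p + q + 1`. On the boundary both sides are `1`, since `A(n, d) = 0` for `|d| > n`. -/

open Equiv Finset

section Perm

variable {β : Type*}

theorem Equiv.Perm.mul_self_eq_one_iff_involutive (π : Perm β) :
    π * π = 1 ↔ Function.Involutive π := by
  simp [Perm.ext_iff, Function.Involutive]

theorem Equiv.Perm.apply_ne_iff_of_apply_eq_self {π : Perm β} {a : β} (ha : π a = a) (x : β) :
    π x ≠ a ↔ x ≠ a := by
  rw [← ha, π.injective.ne_iff, ha]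

theorem Equiv.Perm.apply_ne_and_ne_iff {π : Perm β} {a b : β} (hab : π a = b) (hba : π b = a)
    (x : β) : (π x ≠ a ∧ π x ≠ b) ↔ (x ≠ a ∧ x ≠ b) := by
  rw [← hba, π.injective.ne_iff, hba, ← hab, π.injective.ne_iff, hab, and_comm]

variable [DecidableEq β] {a b : β}

theorem swap_mul_ofSubtype_apply_left (τ : Perm {x : β // x ≠ a ∧ x ≠ b}) :
    (swap a b * Perm.ofSubtype τ) a = b := by
  simp [Perm.ofSubtype_apply_of_not_mem τ (p := fun x => x ≠ a ∧ x ≠ b) (a := a) (by simp)]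

theorem swap_mul_ofSubtype_apply_right (τ : Perm {x : β // x ≠ a ∧ x ≠ b}) :
    (swap a b * Perm.ofSubtype τ) b = a := by
  simp [Perm.ofSubtype_apply_of_not_mem τ (p := fun x => x ≠ a ∧ x ≠ b) (a := b) (by simp)]

theorem subtypePerm_swap_mul_ofSubtype (τ : Perm {x : β // x ≠ a ∧ x ≠ b}) :
    (swap a b * Perm.ofSubtype τ).subtypePerm (Perm.apply_ne_and_ne_iff
      (swap_mul_ofSubtype_apply_left τ) (swap_mul_ofSubtype_apply_right τ)) = τ := by
  ext y
  have := (τ y).2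
  simp [Perm.ofSubtype_apply_of_mem τ y.2, swap_apply_of_ne_of_ne this.1 this.2]

end Perm

theorem Nat.card_subtype_eq_sum_card_fiber {X β : Type*} [Finite X] [Fintype β] [DecidableEq β]
    (S : X → Prop) (f : X → β) :
    Nat.card {x // S x} = ∑ b, Nat.card {x // S x ∧ f x = b} := by
  classical
  have := Fintype.ofFinite X
  simp only [Nat.card_eq_fintype_card, Fintype.card_subtype]
  rw [card_eq_sum_card_fiberwise (f := f) (t := univ) (by simp)]
  simp [filter_filter]

section SignedInvolution

variable {α : Type*} [Fintype α] [DecidableEq α]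

theorem Fintype.card_subtype_ne (a : α) : Fintype.card {x // x ≠ a} = Fintype.card α - 1 := by
  simp [Fintype.card_subtype_compl]

theorem Fintype.card_subtype_ne_and_ne {a b : α} (h : b ≠ a) :
    Fintype.card {x // x ≠ a ∧ x ≠ b} = Fintype.card α - 2 := by
  rw [Fintype.card_subtype, show ({x | x ≠ a ∧ x ≠ b} : Finset α) = {a, b}ᶜ by ext; simp,
    card_compl, card_pair h.symm]

def fixedPointSign (π : Perm α) (ε : α → Bool) (x : α) : ℤ :=
  if π x = x then (if ε x then 1 else -1) else 0

def signBalance (π : Perm α) (ε : α → Bool) : ℤ := ∑ x, fixedPointSign π ε x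

def IsSignedInvolution (d : ℤ) (x : Perm α × (α → Bool)) : Prop :=
  x.1 * x.1 = 1 ∧ (∀ i, x.1 i ≠ i → x.2 i = true) ∧ signBalance x.1 x.2 = d

abbrev SignedInvolution (α : Type*) [Fintype α] [DecidableEq α] (d : ℤ) :=
  {x : Perm α × (α → Bool) // IsSignedInvolution d x}

theorem signBalance_eq_card_sub_card (π : Perm α) (ε : α → Bool) :
    signBalance π ε = ((univ.filter fun i => π i = i ∧ ε i = true).card : ℤ) -
      ((univ.filter fun i => π i = i ∧ ε i = false).card : ℤ) := by
  simp only [signBalance, card_filter, Nat.cast_sum, ← sum_sub_distrib]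
  refine sum_congr rfl fun x _ => ?_
  unfold fixedPointSign
  split_ifs <;> simp_all

theorem abs_signBalance_le (π : Perm α) (ε : α → Bool) :
    |signBalance π ε| ≤ Fintype.card α := by
  calc |signBalance π ε| ≤ ∑ x, |fixedPointSign π ε x| := abs_sum_le_sum_abs _ _
    _ ≤ ∑ _x : α, 1 := sum_le_sum fun x _ => by unfold fixedPointSign; split_ifs <;> simp
    _ = Fintype.card α := by simp

theorem card_signedInvolution_eq_zero {d : ℤ} (hd : (Fintype.card α : ℤ) < |d|) :
    Nat.card (SignedInvolution α d) = 0 := by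
  refine Nat.card_eq_zero.2 (.inl ⟨fun ⟨⟨π, ε⟩, _, _, hbal⟩ => ?_⟩)
  have := abs_signBalance_le π ε
  rw [hbal] at this
  omega

theorem card_signedInvolution_of_isEmpty [IsEmpty α] :
    Nat.card (SignedInvolution α 0) = 1 := by
  have : Nonempty (SignedInvolution α 0) :=
    ⟨⟨(1, isEmptyElim), by simp [IsSignedInvolution, signBalance]⟩⟩
  exact Nat.card_eq_one_iff_unique.2 ⟨inferInstance, this⟩

section Restrict

variable {p : α → Prop} [DecidablePred p]

theorem signBalance_eq_subtypePerm_add (π : Perm α) (ε : α → Bool)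
    (h : ∀ x, p (π x) ↔ p x) :
    signBalance π ε = signBalance (π.subtypePerm h) (fun y => ε y) +
      ∑ x : {x // ¬p x}, fixedPointSign π ε x := by
  rw [signBalance, ← Fintype.sum_subtype_add_sum_subtype p]
  congr 1
  refine sum_congr rfl fun x _ => ?_
  simp [fixedPointSign, Subtype.ext_iff]

theorem isSignedInvolution_iff_subtypePerm {π : Perm α} {ε : α → Bool} {d c : ℤ}
    (h : ∀ x, p (π x) ↔ p x) (hinv : ∀ x, ¬p x → π (π x) = x)
    (hnorm : ∀ x, ¬p x → π x ≠ x → ε x = true)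
    (hc : ∑ x : {x // ¬p x}, fixedPointSign π ε x = c) :
    IsSignedInvolution d (π, ε) ↔
      IsSignedInvolution (d - c) (π.subtypePerm h, fun y => ε y) := by
  unfold IsSignedInvolution
  dsimp only
  rw [signBalance_eq_subtypePerm_add π ε h, hc, Perm.mul_self_eq_one_iff_involutive,
    Perm.mul_self_eq_one_iff_involutive]
  refine and_congr ?_ (and_congr ?_ ⟨fun h => by omega, fun h => by omega⟩)
  · simp only [Function.Involutive, Perm.subtypePerm_apply, Subtype.ext_iff, Subtype.forall]
    exact ⟨fun h x _ => h x, fun h' x => by by_cases hx : p x <;> simp_all⟩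
  · simp only [Perm.subtypePerm_apply, ne_eq, Subtype.ext_iff, Subtype.forall]
    exact ⟨fun h x _ => h x, fun h' x => by by_cases hx : p x <;> simp_all⟩

end Restrict

theorem sum_fixedPointSign_eq_of_apply_eq_self {π : Perm α} {ε : α → Bool} {a : α}
    (ha : π a = a) :
    ∑ x : {x // ¬x ≠ a}, fixedPointSign π ε x = if ε a then 1 else -1 := by
  rw [← sum_subtype {a} (by simp), sum_singleton, fixedPointSign, if_pos ha]

def fixedPointEquiv (a : α) (s : Bool) (d : ℤ) :
    {x : Perm α × (α → Bool) // (IsSignedInvolution d x ∧ x.1 a = a) ∧ x.2 a = s} ≃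
      SignedInvolution {x // x ≠ a} (d - if s then 1 else -1) where
  toFun x := ⟨(x.1.1.subtypePerm (Perm.apply_ne_iff_of_apply_eq_self x.2.1.2),
      fun y => x.1.2 y), by
    obtain ⟨⟨π, ε⟩, ⟨hx, ha⟩, hs⟩ := x
    refine (isSignedInvolution_iff_subtypePerm _ ?_ ?_
      ((sum_fixedPointSign_eq_of_apply_eq_self ha).trans (by rw [hs]))).1 hx
    · simp_all
    · simp_all⟩
  invFun y := ⟨(Perm.ofSubtype y.1.1, fun x => if h : x ≠ a then y.1.2 ⟨x, h⟩ else s), by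
    obtain ⟨⟨τ, ε⟩, hy⟩ := y
    have ha : Perm.ofSubtype τ a = a := Perm.ofSubtype_apply_of_not_mem τ (by simp)
    refine ⟨⟨(isSignedInvolution_iff_subtypePerm (Perm.apply_ne_iff_of_apply_eq_self ha) ?_ ?_
      (sum_fixedPointSign_eq_of_apply_eq_self ha)).2 ?_, ha⟩, by simp⟩
    · simp_all
    · simp_all
    · simpa [Perm.subtypePerm_ofSubtype, fun y : {x // x ≠ a} => y.2] using hy⟩
  left_inv := by
    rintro ⟨⟨π, ε⟩, ⟨-, ha⟩, rfl⟩
    refine Subtype.ext (Prod.ext (Perm.ofSubtype_subtypePerm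
      (Perm.apply_ne_iff_of_apply_eq_self ha) fun x hx h => ?_) (funext fun x => ?_))
    · exact hx (h ▸ ha)
    · by_cases hx : x = a <;> simp [hx]
  right_inv := by
    rintro ⟨⟨τ, ε⟩, -⟩
    exact Subtype.ext (Prod.ext (Perm.subtypePerm_ofSubtype τ) (funext fun y => dif_pos y.2))

theorem sum_fixedPointSign_eq_zero_of_transposition {π : Perm α} {ε : α → Bool} {a b : α}
    (hab : π a = b) (hba : π b = a) (hne : b ≠ a) :
    ∑ x : {x // ¬(x ≠ a ∧ x ≠ b)}, fixedPointSign π ε x = 0 := by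
  refine Fintype.sum_eq_zero _ fun ⟨x, hx⟩ => if_neg ?_
  rw [not_and_or, not_not, not_not] at hx
  rcases hx with rfl | rfl
  · simpa [hab] using hne
  · simpa [hba] using hne.symm

theorem IsSignedInvolution.apply_apply {d : ℤ} {x : Perm α × (α → Bool)}
    (hx : IsSignedInvolution d x) (i : α) : x.1 (x.1 i) = i :=
  (Perm.mul_self_eq_one_iff_involutive x.1).1 hx.1 i

theorem IsSignedInvolution.apply_eq_of_apply_eq {d : ℤ} {x : Perm α × (α → Bool)}
    (hx : IsSignedInvolution d x) {a b : α} (hab : x.1 a = b) : x.1 b = a := by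
  rw [← hab, hx.apply_apply]

def transpositionEquiv {a b : α} (hne : b ≠ a) (d : ℤ) :
    {x : Perm α × (α → Bool) // IsSignedInvolution d x ∧ x.1 a = b} ≃
      SignedInvolution {x // x ≠ a ∧ x ≠ b} d where
  toFun x := ⟨(x.1.1.subtypePerm
      (Perm.apply_ne_and_ne_iff x.2.2 (x.2.1.apply_eq_of_apply_eq x.2.2)), fun y => x.1.2 y), by
    obtain ⟨⟨π, ε⟩, hx, hab⟩ := x
    have hba : π b = a := hx.apply_eq_of_apply_eq hab
    simpa only [sub_zero] using (isSignedInvolution_iff_subtypePerm _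
      (fun i _ => hx.apply_apply i) (fun i _ => hx.2.1 i)
      (sum_fixedPointSign_eq_zero_of_transposition hab hba hne)).1 hx⟩
  invFun y := ⟨(swap a b * Perm.ofSubtype y.1.1,
      fun x => if h : x ≠ a ∧ x ≠ b then y.1.2 ⟨x, h⟩ else true), by
    obtain ⟨⟨τ, ε⟩, hy⟩ := y
    have hab := swap_mul_ofSubtype_apply_left τ
    have hba := swap_mul_ofSubtype_apply_right τ
    refine ⟨(isSignedInvolution_iff_subtypePerm (Perm.apply_ne_and_ne_iff hab hba) ?_ ?_
      (sum_fixedPointSign_eq_zero_of_transposition hab hba hne)).2 ?_, hab⟩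
    · intro i hi
      rw [not_and_or, not_not, not_not] at hi
      rcases hi with rfl | rfl <;> simp only [hab, hba]
    · intro i hi _
      simp [hi]
    · rw [sub_zero, subtypePerm_swap_mul_ofSubtype]
      simpa [fun y : {x // x ≠ a ∧ x ≠ b} => y.2] using hy⟩
  left_inv := by
    rintro ⟨⟨π, ε⟩, hx, hab : π a = b⟩
    have hba : π b = a := hx.apply_eq_of_apply_eq hab
    refine Subtype.ext (Prod.ext (Perm.ext fun i => ?_) (funext fun i => ?_)) <;> dsimp only
    · by_cases hia : i = a
      · rw [hia]; exact (swap_mul_ofSubtype_apply_left _).trans hab.symm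
      by_cases hib : i = b
      · rw [hib]; exact (swap_mul_ofSubtype_apply_right _).trans hba.symm
      have hπi : π i ≠ a ∧ π i ≠ b := (Perm.apply_ne_and_ne_iff hab hba i).2 ⟨hia, hib⟩
      rw [Perm.mul_apply, Perm.ofSubtype_apply_of_mem (π.subtypePerm _) ⟨hia, hib⟩]
      exact swap_apply_of_ne_of_ne hπi.1 hπi.2
    · by_cases hi : i ≠ a ∧ i ≠ b
      · simp [hi]
      · rw [dif_neg hi, eq_comm]
        refine hx.2.1 i ?_
        rw [not_and_or, not_not, not_not] at hi
        rcases hi with rfl | rfl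
        · rw [hab]; exact hne
        · rw [hba]; exact hne.symm
  right_inv := by
    rintro ⟨⟨τ, ε⟩, -⟩
    exact Subtype.ext
      (Prod.ext (subtypePerm_swap_mul_ofSubtype τ) (funext fun y => dif_pos y.2))

theorem card_signedInvolution_eq_add (a : α) (d : ℤ) :
    Nat.card (SignedInvolution α d) =
      Nat.card (SignedInvolution {x // x ≠ a} (d - 1)) +
        Nat.card (SignedInvolution {x // x ≠ a} (d + 1)) +
        ∑ b : {x // x ≠ a}, Nat.card (SignedInvolution {x // x ≠ a ∧ x ≠ b.1} d) := by
  rw [Nat.card_subtype_eq_sum_card_fiber _ fun x => x.1 a,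
    Fintype.sum_eq_add_sum_subtype_ne _ a, Nat.card_subtype_eq_sum_card_fiber _ fun x => x.2 a,
    Fintype.sum_bool,
    Nat.card_congr (fixedPointEquiv a true d), Nat.card_congr (fixedPointEquiv a false d)]
  simp only [Bool.false_eq_true, if_true, if_false, sub_neg_eq_add]
  exact congrArg _ (sum_congr rfl fun b _ => Nat.card_congr (transpositionEquiv b.2 d))

end SignedInvolution

section Delannoy

theorem length_le_of_isDelannoy {p q : ℕ} {l : List DStep} (h : IsDelannoy p q l) :
    l.length ≤ p + q := by
  suffices ∀ l : List DStep, l.length ≤ (l.map stepVec).sum.1 + (l.map stepVec).sum.2 by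
    simpa [show (l.map stepVec).sum = (p, q) from h] using this l
  intro l
  induction l with
  | nil => simp
  | cons s t ih => cases s <;> simp [stepVec] <;> omega

instance : Fintype DStep := ⟨{.E, .N, .D}, fun s => by cases s <;> simp⟩

instance (p q : ℕ) : Finite {l : List DStep // IsDelannoy p q l} :=
  ((List.finite_length_le DStep (p + q)).subset fun _ => length_le_of_isDelannoy).to_subtype

noncomputable def delannoyWeightSum (p q : ℕ) : ℕ :=
  ∑ᶠ L : {l : List DStep // IsDelannoy p q l}, weight L.1

theorem weightFrom_append_singleton (ab : ℕ × ℕ) (l : List DStep) (s : DStep) :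
    weightFrom ab (l ++ [s]) = weightFrom ab l *
      if s = .D then (ab + (l.map stepVec).sum).1 + (ab + (l.map stepVec).sum).2 + 1 else 1 := by
  induction l generalizing ab with
  | nil => simp [weightFrom]
  | cons t l ih => simp [weightFrom, ih, mul_assoc, add_assoc]

theorem weight_append_singleton {p q : ℕ} {l : List DStep} (h : IsDelannoy p q l) (s : DStep) :
    weight (l ++ [s]) = weight l * if s = .D then p + q + 1 else 1 := by
  unfold IsDelannoy at h
  simp [weight, weightFrom_append_singleton, h]

theorem isDelannoy_append_singleton {p q : ℕ} {l : List DStep} {s : DStep} :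
    IsDelannoy p q (l ++ [s]) ↔ (l.map stepVec).sum + stepVec s = (p, q) := by
  simp [IsDelannoy]

def appendLastStep (p q : ℕ) :
    {l // IsDelannoy p (q + 1) l} ⊕ {l // IsDelannoy (p + 1) q l} ⊕ {l // IsDelannoy p q l} →
      {l // IsDelannoy (p + 1) (q + 1) l} :=
  Sum.elim (fun t => ⟨t.1 ++ [.E], isDelannoy_append_singleton.2 (by rw [t.2]; rfl)⟩) <|
    Sum.elim (fun t => ⟨t.1 ++ [.N], isDelannoy_append_singleton.2 (by rw [t.2]; rfl)⟩)
      fun t => ⟨t.1 ++ [.D], isDelannoy_append_singleton.2 (by rw [t.2]; rfl)⟩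

theorem appendLastStep_bijective (p q : ℕ) : Function.Bijective (appendLastStep p q) := by
  constructor
  · rintro (⟨x, _⟩ | ⟨x, _⟩ | ⟨x, _⟩) (⟨y, _⟩ | ⟨y, _⟩ | ⟨y, _⟩) h <;>
      simp_all [appendLastStep, Subtype.ext_iff]
  · rintro ⟨l, hl⟩
    rcases l.eq_nil_or_concat' with rfl | ⟨t, s, rfl⟩
    · exact absurd (congrArg Prod.fst hl) (by simp)
    rw [isDelannoy_append_singleton, Prod.ext_iff] at hl
    cases s
    · exact ⟨.inl ⟨t, Prod.ext_iff.2 (by simp_all [stepVec])⟩, rfl⟩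
    · exact ⟨.inr (.inl ⟨t, Prod.ext_iff.2 (by simp_all [stepVec])⟩), rfl⟩
    · exact ⟨.inr (.inr ⟨t, Prod.ext_iff.2 (by simp_all [stepVec])⟩), rfl⟩

theorem delannoyWeightSum_succ_succ (p q : ℕ) :
    delannoyWeightSum (p + 1) (q + 1) = delannoyWeightSum p (q + 1) +
      delannoyWeightSum (p + 1) q + (p + q + 1) * delannoyWeightSum p q := by
  have (p q : ℕ) : Fintype {l // IsDelannoy p q l} := Fintype.ofFinite _
  simp only [delannoyWeightSum, finsum_eq_sum_of_fintype]
  rw [← (Equiv.ofBijective _ (appendLastStep_bijective p q)).sum_comp, Fintype.sum_sum_type,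
    Fintype.sum_sum_type, mul_sum, add_assoc]
  refine congr_arg₂ (· + ·) (sum_congr rfl fun t _ => ?_) <| congr_arg₂ (· + ·)
    (sum_congr rfl fun t _ => ?_) (sum_congr rfl fun t _ => ?_) <;>
    simp [appendLastStep, weight_append_singleton t.2, mul_comm]

theorem weightFrom_replicate {s : DStep} (hs : s ≠ .D) (ab : ℕ × ℕ) (n : ℕ) :
    weightFrom ab (List.replicate n s) = 1 := by
  induction n generalizing ab with
  | zero => rfl
  | succ n ih => simp [List.replicate_succ, weightFrom, hs, ih]

theorem isDelannoy_zero_right_iff {p : ℕ} {l : List DStep} :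
    IsDelannoy p 0 l ↔ l = List.replicate p .E := by
  refine ⟨fun h => ?_, by rintro rfl; simp [IsDelannoy, stepVec]⟩
  have hE : ∀ s ∈ l, s = .E := fun s hs => by
    have := List.le_sum_of_mem (List.mem_map_of_mem (f := stepVec) hs)
    rw [show (l.map stepVec).sum = (p, 0) from h] at this
    cases s <;> simp_all [stepVec, Prod.le_def]
  rw [List.eq_replicate_iff.2 ⟨rfl, hE⟩] at h ⊢
  simpa [IsDelannoy, stepVec] using h

theorem isDelannoy_zero_left_iff {q : ℕ} {l : List DStep} :
    IsDelannoy 0 q l ↔ l = List.replicate q .N := by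
  refine ⟨fun h => ?_, by rintro rfl; simp [IsDelannoy, stepVec]⟩
  have hN : ∀ s ∈ l, s = .N := fun s hs => by
    have := List.le_sum_of_mem (List.mem_map_of_mem (f := stepVec) hs)
    rw [show (l.map stepVec).sum = (0, q) from h] at this
    cases s <;> simp_all [stepVec, Prod.le_def]
  rw [List.eq_replicate_iff.2 ⟨rfl, hN⟩] at h ⊢
  simpa [IsDelannoy, stepVec] using h

theorem delannoyWeightSum_zero_right (p : ℕ) : delannoyWeightSum p 0 = 1 := by
  simp [delannoyWeightSum, finsum_subtype_eq_finsum_cond, isDelannoy_zero_right_iff, weight,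
    weightFrom_replicate]

theorem delannoyWeightSum_zero_left (q : ℕ) : delannoyWeightSum 0 q = 1 := by
  simp [delannoyWeightSum, finsum_subtype_eq_finsum_cond, isDelannoy_zero_left_iff, weight,
    weightFrom_replicate]

end Delannoy

theorem card_signedInvolution (p q : ℕ) {α : Type*} [Fintype α] [DecidableEq α]
    (h : Fintype.card α = p + q) :
    Nat.card (SignedInvolution α (p - q)) = delannoyWeightSum p q := by
  induction hn : p + q using Nat.strong_induction_on generalizing p q α with
  | _ n ih =>
  replace ih : ∀ m < n, ∀ p q {β : Type _} [Fintype β] [DecidableEq β],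
      Fintype.card β = m → p + q = m → ∀ d : ℤ, d = p - q →
        Nat.card (SignedInvolution β d) = delannoyWeightSum p q := by
    rintro m hm p q β _ _ hβ hpq d rfl
    exact ih m hm p q (hβ.trans hpq.symm) hpq
  obtain _ | n := n
  · obtain ⟨rfl, rfl⟩ : p = 0 ∧ q = 0 := by omega
    have := Fintype.card_eq_zero_iff.1 (h.trans hn)
    simpa [delannoyWeightSum_zero_left] using card_signedInvolution_of_isEmpty (α := α)
  obtain ⟨a⟩ : Nonempty α := Fintype.card_pos_iff.1 (by omega)
  have h' : Fintype.card {x // x ≠ a} = n := by rw [Fintype.card_subtype_ne]; omega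
  have h'' (b : {x // x ≠ a}) : Fintype.card {x // x ≠ a ∧ x ≠ b.1} = n - 1 := by
    rw [Fintype.card_subtype_ne_and_ne b.2]; omega
  rw [card_signedInvolution_eq_add a]
  rcases p with _ | p <;> rcases q with _ | q
  · omega
  · rw [card_signedInvolution_eq_zero (by rw [h']; exact lt_abs.2 (.inr (by omega))),
      ih n (by omega) 0 q h' (by omega) _ (by omega),
      sum_eq_zero fun b _ =>
        card_signedInvolution_eq_zero (by rw [h'' b]; exact lt_abs.2 (.inr (by omega))),
      delannoyWeightSum_zero_left, delannoyWeightSum_zero_left, zero_add, add_zero]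
  · rw [ih n (by omega) p 0 h' (by omega) _ (by omega),
      card_signedInvolution_eq_zero (by rw [h']; exact lt_abs.2 (.inl (by omega))),
      sum_eq_zero fun b _ =>
        card_signedInvolution_eq_zero (by rw [h'' b]; exact lt_abs.2 (.inl (by omega))),
      delannoyWeightSum_zero_right, delannoyWeightSum_zero_right, add_zero]
  · rw [ih n (by omega) p (q + 1) h' (by omega) _ (by omega),
      ih n (by omega) (p + 1) q h' (by omega) _ (by omega),
      sum_congr rfl fun b _ => ih (n - 1) (by omega) p q (h'' b) (by omega) _ (by omega),
      sum_const, card_univ, h', smul_eq_mul, delannoyWeightSum_succ_succ]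
    obtain rfl : n = p + q + 1 := by omega
    ring

theorem isSignedInv_iff (p q : ℕ) (x : Perm (Fin (p + q)) × (Fin (p + q) → Bool)) :
    IsSignedInv p q x ↔ IsSignedInvolution ((p : ℤ) - q) x := by
  rw [IsSignedInv, IsSignedInvolution, signBalance_eq_card_sub_card]

theorem stmt8 (p q : ℕ) :
    alphaCount p q = ∑ᶠ L : {l : List DStep // IsDelannoy p q l}, weight L.1 := by
  rw [alphaCount, Nat.card_congr (Equiv.subtypeEquivRight (isSignedInv_iff p q)),
    card_signedInvolution p q (Fintype.card_fin _), delannoyWeightSum]
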